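/- arXiv:2104.09148 — 2 statements merged into one kernel-verified Lean document; each statement's English description precedes it below -/
import Mathlib

section
/- Suppose there exists a coloring e:[ω₁]²→ω such that for every infinite A ⊆ ω₁ and every uncountable B ⊆ ω₁ there is α ∈ A such that {e(α,β) : β ∈ B, β > α} = ω. Then there exists a set X of functions from ω to ω with |X| = ℵ₁ such that for every function y:ω→ω there is x ∈ X for which the set {n < ω : x(n) = y(n)} is infinite. -/
noncomputable section

open Cardinal Set Ordinal

/-- The set of countable ordinals, as a type of order type `ω₁`. -/
abbrev Omega1 : Type := (Ordinal.omega 1).ToType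

instance : Nonempty Omega1 :=
  Ordinal.toType_nonempty_iff_ne_zero.2
    (Ordinal.omega0_pos.trans Ordinal.omega0_lt_omega_one).ne'

/-- Proposition (M): there is a nonmeager set of reals of cardinality `ℵ₁`. -/
def PropM : Prop := ∃ X : Set ℝ, #X = Cardinal.aleph 1 ∧ ¬ IsMeagre X

/-!
Fix distinct countable ordinals `α₀, α₁, …` and let `x_β n = e(αₙ, β)`. If some `y` agreed
only finitely often with every `x_β`, say `x_β n ≠ y n` for `n ≥ m(β)`, then `m` would be
constant, say `m₀`, on an uncountable set `B`; the hypothesis applied to `{αₙ | n ≥ m₀}` and `B`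
yields `n ≥ m₀` and `β ∈ B` with `e(αₙ, β) = y n`, a contradiction. Padding `{x_β}` to
cardinality `ℵ₁` inside `ℕ → ℕ` (of cardinality `𝔠 ≥ ℵ₁`) gives `X`.
-/

theorem exists_not_countable_preimage_singleton {J : Type*} [Uncountable J] (m : J → ℕ) :
    ∃ k, ¬ (m ⁻¹' {k}).Countable := by
  by_contra! h
  exact not_countable_univ <| by
    simpa [← preimage_iUnion, iUnion_of_singleton] using countable_iUnion h

theorem exists_infinite_setOf_eq {J : Type*} [Uncountable J] (g : J → ℕ → ℕ)
    (hg : ∀ B : Set J, ¬ B.Countable → ∀ m, ∃ n ≥ m, ∀ k, ∃ j ∈ B, g j n = k) (y : ℕ → ℕ) :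
    ∃ j, {n | g j n = y n}.Infinite := by
  by_contra! hfin
  have hm : ∀ j, ∃ m, ∀ n ≥ m, g j n ≠ y n := fun j => by
    have := (hfin j).eventually_cofinite_notMem
    rw [Nat.cofinite_eq_atTop, Filter.eventually_atTop] at this
    simpa using this
  choose m hm using hm
  obtain ⟨m₀, hB⟩ := exists_not_countable_preimage_singleton m
  obtain ⟨n, hn, hsurj⟩ := hg _ hB m₀
  obtain ⟨j, hj, hjn⟩ := hsurj (y n)
  exact hm j n (by rwa [hj]) hjn

theorem exists_superset_mk_eq {α : Type*} {s : Set α} {κ : Cardinal} (hκ : ℵ₀ ≤ κ)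
    (hs : #s ≤ κ) (hα : κ ≤ #α) : ∃ t, s ⊆ t ∧ #t = κ := by
  obtain ⟨u, hu⟩ := le_mk_iff_exists_set.1 hα
  refine ⟨s ∪ u, subset_union_left, le_antisymm ?_ (hu ▸ mk_le_mk_of_subset subset_union_right)⟩
  calc #(s ∪ u : Set α) ≤ #s + #u := mk_union_le s u
    _ ≤ κ + κ := add_le_add hs hu.le
    _ = κ := add_eq_self hκ

theorem mk_omega1 : #Omega1 = ℵ₁ := by
  rw [mk_toType, card_omega]

instance : Uncountable Omega1 := by
  rw [← aleph0_lt_mk_iff, mk_omega1]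
  exact aleph0_lt_aleph_one

/-- From a coloring `e` as in statement 5 one obtains a set `X` of functions from
`ω` to `ω` of cardinality `ℵ₁` such that every `y : ω → ω` agrees infinitely often
with some `x ∈ X`. -/
theorem statement6
    (h : ∃ e : Omega1 → Omega1 → ℕ,
      ∀ A : Set Omega1, A.Infinite → ∀ B : Set Omega1, ¬ B.Countable →
        ∃ α ∈ A, {n : ℕ | ∃ β ∈ B, α < β ∧ e α β = n} = Set.univ) :
    ∃ X : Set (ℕ → ℕ), #X = Cardinal.aleph 1 ∧
      ∀ y : ℕ → ℕ, ∃ x ∈ X, {n : ℕ | x n = y n}.Infinite := by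
  obtain ⟨e, he⟩ := h
  let a : ℕ ↪ Omega1 := Infinite.natEmbedding Omega1
  let g : Omega1 → ℕ → ℕ := fun β n => e (a n) β
  have hg : ∀ B : Set Omega1, ¬ B.Countable → ∀ m, ∃ n ≥ m, ∀ k, ∃ β ∈ B, g β n = k := by
    intro B hB m
    obtain ⟨_, ⟨n, hn, rfl⟩, hsurj⟩ :=
      he _ ((Ici_infinite m).image a.injective.injOn) B hB
    refine ⟨n, hn, fun k => ?_⟩
    obtain ⟨β, hβ, -, hk⟩ := hsurj.symm ▸ mem_univ k
    exact ⟨β, hβ, hk⟩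
  obtain ⟨X, hgX, hX⟩ := exists_superset_mk_eq (aleph0_le_aleph 1)
    (mk_omega1 ▸ mk_range_le : #(range g) ≤ ℵ₁)
    (by simpa using aleph_one_le_continuum)
  refine ⟨X, hX, fun y => ?_⟩
  obtain ⟨β, hβ⟩ := exists_infinite_setOf_eq g hg y
  exact ⟨g β, hgX (mem_range_self β), hβ⟩
end
end

section
/- Let p:[ω₁]²→ω be a partition with injective fibers and almost-disjoint fibers, and let c:[ω₁]²→ω be any coloring. Then the partial order ℚ(p,c) has Property K: every uncountable set of conditions of ℚ(p,c) contains an uncountable subset of pairwise compatible conditions. -/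
noncomputable section

open Cardinal Set Ordinal

/-- A condition of the poset `ℚ(p,c)`: a triple `(a, f, w)` where `a` is a finite
subset of `ω₁`, `f : a → ω` (modelled as a total function, only its restriction to
`a` is relevant), and `w` is a function from a finite subset `wdom` of `ω × ω` to `ω`
(modelled likewise), such that whenever `α < β` in `a` and `f(α) = f(β)`, we have
`(f(α), p(α,β)) ∈ wdom` and `c(α,β) = w(f(α), p(α,β))`. -/
structure QCond (p c : Omega1 → Omega1 → ℕ) where
  a : Finset Omega1
  f : Omega1 → ℕ
  wdom : Finset (ℕ × ℕ)
  w : ℕ × ℕ → ℕ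
  compat : ∀ α ∈ a, ∀ β ∈ a, α < β → f α = f β →
    (f α, p α β) ∈ wdom ∧ c α β = w (f α, p α β)

/-- The extension order of `ℚ(p,c)`: `q' ≤ q` iff `a_q ⊆ a_{q'}`, `f_{q'}` extends
`f_q`, and `w_{q'}` extends `w_q`. -/
def QLe {p c : Omega1 → Omega1 → ℕ} (q' q : QCond p c) : Prop :=
  q.a ⊆ q'.a ∧ (∀ α ∈ q.a, q'.f α = q.f α) ∧
    q.wdom ⊆ q'.wdom ∧ ∀ x ∈ q.wdom, q'.w x = q.w x

/-- Two conditions are compatible iff they have a common extension. -/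
def QCompatible {p c : Omega1 → Omega1 → ℕ} (q q' : QCond p c) : Prop :=
  ∃ r : QCond p c, QLe r q ∧ QLe r q'

/-!
Thin an uncountable family of conditions until any two members amalgamate. First fix `w`
(countably many choices), then make the supports an ordered Δ-system with root `R` on which
the `f`'s agree, and finally, by a free-set argument resting on the pressing-down lemma for
finite sets, arrange that no tail point of an earlier condition is *bad* for a later one.
For `q` earlier than `q'`, the only new pairs `α < β` are `α` in the tail of `q` and `β` in the tail
of `q'`; goodness makes their keys `(f α, p(α,β))` avoid `dom w` and pairwise distinct, so `w`
extends by `c`. Each condition has only finitely many bad points: almost-disjointness of the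
fibers leaves finitely many values shared by two fibers of its tail, and injectivity of the
fibers leaves finitely many points below `β` with a given value of `p(·, β)`.
-/

theorem exists_not_countable_fiber {X Y : Type*} {S : Set X} (hS : ¬ S.Countable)
    {C : Set Y} (hC : C.Countable) {g : X → Y} (hg : MapsTo g S C) :
    ∃ y, ¬ {x ∈ S | g x = y}.Countable := by
  by_contra! h
  exact hS <| (hC.biUnion fun y _ => h y).mono fun x hx =>
    mem_biUnion (hg hx) (show x ∈ {x' ∈ S | g x' = g x} from ⟨hx, rfl⟩)

theorem countable_setOf_finset_subset {α : Type*} {C : Set α} (hC : C.Countable) :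
    {s : Finset α | ↑s ⊆ C}.Countable := by
  refine ((countable_ofPred_finite_subset hC).preimage Finset.coe_injective).mono ?_
  exact fun s hs => ⟨s.finite_toSet, hs⟩

namespace Omega1

theorem mk_eq : #Omega1 = ℵ₁ := by rw [mk_toType, card_omega]

theorem countable_Iio (x : Omega1) : (Iio x).Countable := by
  rw [← le_aleph0_iff_set_countable, ← lt_aleph_one_iff, ← mk_eq]
  exact mk_Iio_lt x (by rw [mk_eq, ord_aleph, type_toType])

theorem countable_Iic (x : Omega1) : (Iic x).Countable := by
  rw [← Iio_insert]
  exact (countable_Iio x).insert x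

theorem not_countable_univ : ¬ (univ : Set Omega1).Countable := by
  rw [← le_aleph0_iff_set_countable, mk_univ, mk_eq, ← lt_aleph_one_iff]
  exact lt_irrefl _

theorem exists_forall_lt_of_countable {C : Set Omega1} (hC : C.Countable) :
    ∃ β, ∀ x ∈ C, x < β := by
  by_contra! h
  exact not_countable_univ <| (hC.biUnion fun x _ => countable_Iic x).mono
    fun β _ => by obtain ⟨x, hx, hβx⟩ := h β; exact mem_biUnion hx hβx

theorem isCofinal_iff_not_countable {U : Set Omega1} : IsCofinal U ↔ ¬ U.Countable := by
  refine ⟨fun hU hc => ?_, fun hU β => ?_⟩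
  · obtain ⟨β, hβ⟩ := exists_forall_lt_of_countable hc
    obtain ⟨γ, hγ, hβγ⟩ := hU β
    exact (hβ γ hγ).not_ge hβγ
  · by_contra! h
    exact hU ((countable_Iio β).mono h)

instance : IsRegularCardinalOrder Omega1 where
  type_lt_le_ord_cof := by
    refine ((type_toType _).trans (ord_aleph 1).symm).trans_le ?_
    rw [ord_le_ord, Order.le_cof_iff]
    intro s hs
    rw [aleph_one_le_iff, ← not_le, le_aleph0_iff_set_countable]
    exact isCofinal_iff_not_countable.1 hs

theorem exists_strictMono_of_not_countable {U : Set Omega1} (hU : ¬ U.Countable) :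
    ∃ σ : Omega1 → Omega1, StrictMono σ ∧ ∀ ι, σ ι ∈ U :=
  ⟨fun ι => Order.enum U (isCofinal_iff_not_countable.2 hU) ι,
    fun _ _ h => (Order.enum U _).strictMono h, fun ι => (Order.enum U _ ι).2⟩

theorem exists_injective_of_not_countable {X : Type} {S : Set X} (hS : ¬ S.Countable) :
    ∃ e : Omega1 → X, Function.Injective e ∧ ∀ ι, e ι ∈ S := by
  have hS : #Omega1 ≤ #S := by
    rwa [mk_eq, aleph_one_le_iff, ← not_le, le_aleph0_iff_set_countable]
  obtain ⟨e⟩ := hS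
  exact ⟨fun ι => e ι, fun _ _ h => e.injective (Subtype.ext h), fun ι => (e ι).2⟩

theorem exists_closed_gt (ν : Omega1 → Omega1) (β : Omega1) :
    ∃ γ, β < γ ∧ ∀ x < γ, ν x < γ := by
  have hnext (γ : Omega1) : ∃ γ', γ < γ' ∧ ∀ x ≤ γ, ν x < γ' := by
    obtain ⟨γ', hγ'⟩ := exists_forall_lt_of_countable (((countable_Iic γ).image ν).insert γ)
    exact ⟨γ', hγ' γ (mem_insert _ _), fun x hx => hγ' _ (mem_insert_of_mem _ ⟨x, hx, rfl⟩)⟩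
  choose next hnext_gt hnext_bound using hnext
  set d : ℕ → Omega1 := fun n => next^[n] β
  have hd (n : ℕ) : d (n + 1) = next (d n) := Function.iterate_succ_apply' _ _ _
  -- the least strict upper bound of the sequence `d` is closed under `ν`
  obtain ⟨γ, hγ, hγ_min⟩ := wellFounded_lt.has_min {γ | ∀ n, d n < γ} <| by
    obtain ⟨γ, hγ⟩ := exists_forall_lt_of_countable (countable_range d)
    exact ⟨γ, fun n => hγ _ ⟨n, rfl⟩⟩
  refine ⟨γ, (hnext_gt β).trans (hd 0 ▸ hγ 1), fun x hx => ?_⟩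
  obtain ⟨n, hn⟩ : ∃ n, x ≤ d n := by
    by_contra! h
    exact hγ_min x h hx
  calc ν x < next (d n) := hnext_bound _ _ hn
    _ = d (n + 1) := (hd n).symm
    _ < γ := hγ _

theorem exists_not_countable_pressing_down (B : Omega1 → Finset Omega1) :
    ∃ γ, ¬ {δ | ∀ x ∈ B δ, x < δ → x ≤ γ}.Countable := by
  by_contra! h
  -- a closure point `δ` of `ν` lies in the set attached to some `γ < δ`, bounded by `ν γ < δ`
  choose ν hν using fun γ => exists_forall_lt_of_countable (h γ)
  obtain ⟨β⟩ : Nonempty Omega1 := inferInstance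
  obtain ⟨δ, hβδ, hδ⟩ := exists_closed_gt ν β
  set F := insert β ((B δ).filter (· < δ))
  have hF : F.max' (Finset.insert_nonempty _ _) < δ := by
    obtain hmax | hmax := Finset.mem_insert.1 (F.max'_mem (Finset.insert_nonempty _ _))
    · rwa [hmax]
    · exact (Finset.mem_filter.1 hmax).2
  refine (hδ _ hF).asymm (hν _ δ fun x hx hxδ => F.le_max' x ?_)
  exact Finset.mem_insert_of_mem (Finset.mem_filter.2 ⟨hx, hxδ⟩)

theorem exists_not_countable_separated {U : Set Omega1} (hU : ¬ U.Countable)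
    (ν : Omega1 → Omega1) :
    ∃ V ⊆ U, ¬ V.Countable ∧ ∀ δ ∈ V, ∀ δ' ∈ V, δ < δ' → ν δ < δ' := by
  obtain ⟨σ, hσ, hσU⟩ := exists_strictMono_of_not_countable hU
  have hν (ι : Omega1) : ∃ ι', ν (σ ι) < σ ι' := by
    obtain ⟨ι', hι'⟩ := exists_forall_lt_of_countable (countable_singleton (ν (σ ι)))
    exact ⟨ι', (hι' _ rfl).trans_le hσ.le_apply⟩
  choose ν' hν' using hν
  set C := {γ | ∀ x < γ, ν' x < γ}
  have hC : ¬ C.Countable := isCofinal_iff_not_countable.1 fun β => by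
    obtain ⟨γ, hβγ, hγ⟩ := exists_closed_gt ν' β
    exact ⟨γ, hγ, hβγ.le⟩
  refine ⟨σ '' C, image_subset_iff.2 fun ι _ => hσU ι,
    fun h => hC (countable_of_injective_of_countable_image hσ.injective.injOn h), ?_⟩
  rintro _ ⟨γ, -, rfl⟩ _ ⟨γ', hγ', rfl⟩ hlt
  exact (hν' γ).trans (hσ (hγ' γ (hσ.lt_iff_lt.1 hlt)))

theorem exists_not_countable_free {U : Set Omega1} (hU : ¬ U.Countable)
    (r : Omega1 → Omega1 → Prop) (hr : ∀ ι' ∈ U, {ι ∈ U | ι < ι' ∧ r ι ι'}.Finite) :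
    ∃ J ⊆ U, ¬ J.Countable ∧ ∀ ι ∈ J, ∀ ι' ∈ J, ι < ι' → ¬ r ι ι' := by
  obtain ⟨σ, hσ, hσU⟩ := exists_strictMono_of_not_countable hU
  have hfin (ι' : Omega1) : {ι | ι < ι' ∧ r (σ ι) (σ ι')}.Finite :=
    ((hr _ (hσU ι')).preimage hσ.injective.injOn).subset
      fun ι ⟨hlt, hrι⟩ => ⟨hσU ι, hσ hlt, hrι⟩
  obtain ⟨γ, hγ⟩ := exists_not_countable_pressing_down fun ι' => (hfin ι').toFinset
  set J := {δ | ∀ x ∈ (hfin δ).toFinset, x < δ → x ≤ γ} \ Iic γ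
  have hJ : ¬ J.Countable := fun h => hγ (h.of_sdiff (countable_Iic γ))
  refine ⟨σ '' J, image_subset_iff.2 fun ι _ => hσU ι,
    fun h => hJ (countable_of_injective_of_countable_image hσ.injective.injOn h), ?_⟩
  rintro _ ⟨ι, hι, rfl⟩ _ ⟨ι', hι', rfl⟩ hlt hrι
  have hlt' := hσ.lt_iff_lt.1 hlt
  exact hι.2 (hι'.1 ι ((hfin ι').mem_toFinset.2 ⟨hlt', hrι⟩) hlt')

theorem exists_delta_system (A : Omega1 → Finset Omega1) :
    ∃ U : Set Omega1, ∃ R : Finset Omega1, ¬ U.Countable ∧ (∀ ι ∈ U, R ⊆ A ι) ∧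
      ∀ ι ∈ U, ∀ ι' ∈ U, ι < ι' → ∀ α ∈ A ι \ R, ∀ β ∈ A ι' \ R, α < β := by
  obtain ⟨γ, hγ⟩ := exists_not_countable_pressing_down A
  set U₁ := {δ | ∀ x ∈ A δ, x < δ → x ≤ γ} \ Iic γ
  have hU₁ : ¬ U₁.Countable := fun h => hγ (h.of_sdiff (countable_Iic γ))
  obtain ⟨R, hR⟩ := exists_not_countable_fiber hU₁ (countable_setOf_finset_subset (countable_Iic γ))
    (g := fun δ => (A δ).filter (· ≤ γ)) fun δ _ x hx => (Finset.mem_filter.1 hx).2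
  have htail : ∀ δ ∈ {δ ∈ U₁ | (A δ).filter (· ≤ γ) = R}, ∀ x ∈ A δ \ R, δ ≤ x := by
    rintro δ ⟨hδ, rfl⟩ x hx
    obtain ⟨hxA, hxR⟩ := Finset.mem_sdiff.1 hx
    exact not_lt.1 fun hxδ => hxR (Finset.mem_filter.2 ⟨hxA, hδ.1 x hxA hxδ⟩)
  choose ν hν using fun δ => exists_forall_lt_of_countable (A δ).countable_toSet
  obtain ⟨V, hVU, hV, hsep⟩ := exists_not_countable_separated hR ν
  refine ⟨V, R, hV, fun ι hι => by rw [← (hVU hι).2]; exact Finset.filter_subset _ _, ?_⟩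
  intro ι hι ι' hι' hlt α hα β hβ
  exact ((hν ι α (Finset.mem_sdiff.1 hα).1).trans (hsep ι hι ι' hι' hlt)).trans_le
    (htail ι' (hVU hι') β hβ)

theorem finite_setOf_tail_inter {A : Omega1 → Finset Omega1} {U : Set Omega1} {R : Finset Omega1}
    (hlt : ∀ ι ∈ U, ∀ ι' ∈ U, ι < ι' → ∀ α ∈ A ι \ R, ∀ β ∈ A ι' \ R, α < β)
    {B : Set Omega1} (hB : B.Finite) : {ι ∈ U | ∃ α ∈ A ι \ R, α ∈ B}.Finite := by
  refine (hB.biUnion fun α _ => ?_).subset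
    fun ι ⟨hι, α, hα, hαB⟩ => mem_biUnion hαB (show ι ∈ {ι ∈ U | α ∈ A ι \ R} from ⟨hι, hα⟩)
  refine Set.Subsingleton.finite fun ι₁ ⟨hι₁, hα₁⟩ ι₂ ⟨hι₂, hα₂⟩ => ?_
  by_contra hne
  rcases lt_or_gt_of_ne hne with h | h
  exacts [lt_irrefl α (hlt ι₁ hι₁ ι₂ hι₂ h α hα₁ α hα₂),
    lt_irrefl α (hlt ι₂ hι₂ ι₁ hι₁ h α hα₂ α hα₁)]

end Omega1

theorem QLe.refl {p c : Omega1 → Omega1 → ℕ} (q : QCond p c) : QLe q q :=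
  ⟨subset_rfl, fun _ _ => rfl, subset_rfl, fun _ _ => rfl⟩

theorem QCompatible.symm {p c : Omega1 → Omega1 → ℕ} {q q' : QCond p c}
    (h : QCompatible q q') : QCompatible q' q :=
  let ⟨r, hr, hr'⟩ := h; ⟨r, hr', hr⟩

namespace QCond

variable {p c : Omega1 → Omega1 → ℕ} (q q' : QCond p c)

def amalgF (α : Omega1) : ℕ := if α ∈ q.a then q.f α else q'.f α

def amalgW (k : ℕ × ℕ) : ℕ :=
  if h : ∃ x ∈ (q.a \ q'.a) ×ˢ (q'.a \ q.a), p x.1 x.2 = k.2 then c h.choose.1 h.choose.2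
  else q.w k

def amalgWdom : Finset (ℕ × ℕ) :=
  q.wdom ∪ ((q.a \ q'.a) ×ˢ (q'.a \ q.a)).image fun x => (q.amalgF q' x.1, p x.1 x.2)

variable {q q'}

theorem amalgF_of_mem_left {α : Omega1} (hα : α ∈ q.a) : q.amalgF q' α = q.f α := if_pos hα

theorem amalgF_of_mem_right (hf : ∀ α ∈ q.a, α ∈ q'.a → q.f α = q'.f α) {α : Omega1}
    (hα : α ∈ q'.a) : q.amalgF q' α = q'.f α := by
  unfold amalgF
  split_ifs with hαq
  exacts [hf α hαq hα, rfl]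

theorem amalgW_of_mem_wdom
    (hfresh : ∀ α ∈ q.a \ q'.a, ∀ β ∈ q'.a \ q.a, p α β ∉ q.wdom.image Prod.snd)
    {k : ℕ × ℕ} (hk : k ∈ q.wdom) : q.amalgW q' k = q.w k := by
  refine dif_neg ?_
  rintro ⟨x, hx, hxk⟩
  obtain ⟨hx₁, hx₂⟩ := Finset.mem_product.1 hx
  exact hfresh _ hx₁ _ hx₂ (Finset.mem_image.2 ⟨k, hk, hxk.symm⟩)

theorem amalgW_fresh
    (hinjOn : InjOn (fun x : Omega1 × Omega1 => p x.1 x.2)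
      ↑((q.a \ q'.a) ×ˢ (q'.a \ q.a) : Finset (Omega1 × Omega1)))
    {α β : Omega1} (hα : α ∈ q.a \ q'.a) (hβ : β ∈ q'.a \ q.a) (n : ℕ) :
    q.amalgW q' (n, p α β) = c α β := by
  have hex : ∃ x ∈ (q.a \ q'.a) ×ˢ (q'.a \ q.a), p x.1 x.2 = p α β :=
    ⟨(α, β), Finset.mem_product.2 ⟨hα, hβ⟩, rfl⟩
  rw [amalgW, dif_pos hex]
  obtain ⟨hmem, hp⟩ := hex.choose_spec
  rw [hinjOn hmem (Finset.mem_product.2 ⟨hα, hβ⟩) (show p _ _ = p (α, β).1 (α, β).2 from hp)]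

theorem amalgam_compat (hwdom : q'.wdom = q.wdom) (hw : ∀ k ∈ q.wdom, q'.w k = q.w k)
    (hf : ∀ α ∈ q.a, α ∈ q'.a → q.f α = q'.f α)
    (hlt : ∀ α ∈ q.a \ q'.a, ∀ β ∈ q'.a \ q.a, α < β)
    (hfresh : ∀ α ∈ q.a \ q'.a, ∀ β ∈ q'.a \ q.a, p α β ∉ q.wdom.image Prod.snd)
    (hinjOn : InjOn (fun x : Omega1 × Omega1 => p x.1 x.2)
      ↑((q.a \ q'.a) ×ˢ (q'.a \ q.a) : Finset (Omega1 × Omega1))) :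
    ∀ α ∈ q.a ∪ q'.a, ∀ β ∈ q.a ∪ q'.a, α < β → q.amalgF q' α = q.amalgF q' β →
      (q.amalgF q' α, p α β) ∈ q.amalgWdom q' ∧
        c α β = q.amalgW q' (q.amalgF q' α, p α β) := by
  intro α hα β hβ hαβ hfαβ
  have hcases : (α ∈ q.a ∧ β ∈ q.a) ∨ (α ∈ q'.a ∧ β ∈ q'.a) ∨
      (α ∈ q.a \ q'.a ∧ β ∈ q'.a \ q.a) := by
    have hβα : ¬ (β ∈ q.a \ q'.a ∧ α ∈ q'.a \ q.a) := fun h => (hlt _ h.1 _ h.2).asymm hαβ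
    simp only [Finset.mem_union, Finset.mem_sdiff] at hα hβ hβα ⊢
    tauto
  rcases hcases with ⟨hαq, hβq⟩ | ⟨hαq, hβq⟩ | ⟨hαt, hβt⟩
  · rw [amalgF_of_mem_left hαq, amalgF_of_mem_left hβq] at hfαβ
    obtain ⟨hk, hc⟩ := q.compat α hαq β hβq hαβ hfαβ
    rw [amalgF_of_mem_left hαq]
    exact ⟨Finset.mem_union_left _ hk, hc.trans (amalgW_of_mem_wdom hfresh hk).symm⟩
  · rw [amalgF_of_mem_right hf hαq, amalgF_of_mem_right hf hβq] at hfαβ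
    obtain ⟨hk, hc⟩ := q'.compat α hαq β hβq hαβ hfαβ
    rw [hwdom] at hk
    rw [amalgF_of_mem_right hf hαq, amalgW_of_mem_wdom hfresh hk, ← hw _ hk]
    exact ⟨Finset.mem_union_left _ hk, hc⟩
  · exact ⟨Finset.mem_union_right _
      (Finset.mem_image.2 ⟨(α, β), Finset.mem_product.2 ⟨hαt, hβt⟩, rfl⟩),
      (amalgW_fresh hinjOn hαt hβt _).symm⟩

theorem _root_.QCompatible.of_fresh (hwdom : q'.wdom = q.wdom)
    (hw : ∀ k ∈ q.wdom, q'.w k = q.w k) (hf : ∀ α ∈ q.a, α ∈ q'.a → q.f α = q'.f α)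
    (hlt : ∀ α ∈ q.a \ q'.a, ∀ β ∈ q'.a \ q.a, α < β)
    (hfresh : ∀ α ∈ q.a \ q'.a, ∀ β ∈ q'.a \ q.a, p α β ∉ q.wdom.image Prod.snd)
    (hinjOn : InjOn (fun x : Omega1 × Omega1 => p x.1 x.2)
      ↑((q.a \ q'.a) ×ˢ (q'.a \ q.a) : Finset (Omega1 × Omega1))) :
    QCompatible q q' := by
  refine ⟨⟨q.a ∪ q'.a, q.amalgF q', q.amalgWdom q', q.amalgW q',
    amalgam_compat hwdom hw hf hlt hfresh hinjOn⟩, ⟨Finset.subset_union_left,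
    fun α hα => amalgF_of_mem_left hα, Finset.subset_union_left,
    fun k hk => amalgW_of_mem_wdom hfresh hk⟩, ⟨Finset.subset_union_right,
    fun α hα => amalgF_of_mem_right hf hα, hwdom ▸ Finset.subset_union_left, fun k hk => ?_⟩⟩
  rw [hwdom] at hk
  exact (amalgW_of_mem_wdom hfresh hk).trans (hw k hk).symm

end QCond

section ForbiddenValues

variable (p : Omega1 → Omega1 → ℕ)

/-- The values that a new pair `(α, β)` with `β ∈ t` must avoid for its key `(f α, p α β)` to lie
outside `W` and differ from the keys of the other new pairs. -/
def forbiddenValues (W : Finset (ℕ × ℕ)) (t : Finset Omega1) : Set ℕ :=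
  ↑(W.image Prod.snd) ∪
    {n | ∃ β ∈ t, ∃ β' ∈ t, β < β' ∧ (∃ α < β, p α β = n) ∧ ∃ α < β, p α β' = n}

def badPoints (W : Finset (ℕ × ℕ)) (t : Finset Omega1) : Set Omega1 :=
  {α | ∃ β ∈ t, α < β ∧ p α β ∈ forbiddenValues p W t}

variable {p}

theorem forbiddenValues_finite
    (had : ∀ β β' : Omega1, β < β' →
      ({n : ℕ | ∃ α : Omega1, α < β ∧ p α β = n} ∩
        {n : ℕ | ∃ α : Omega1, α < β ∧ p α β' = n}).Finite)
    (W : Finset (ℕ × ℕ)) (t : Finset Omega1) : (forbiddenValues p W t).Finite := by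
  have hpair (β β' : Omega1) :
      {n | β < β' ∧ (∃ α < β, p α β = n) ∧ ∃ α < β, p α β' = n}.Finite := by
    by_cases h : β < β'
    · exact (had β β' h).subset fun n hn => hn.2
    · exact finite_empty.subset fun n hn => h hn.1
  refine (W.image Prod.snd).finite_toSet.union <|
    (t.finite_toSet.biUnion fun β _ => t.finite_toSet.biUnion fun β' _ => hpair β β').subset ?_
  rintro n ⟨β, hβ, β', hβ', hn⟩
  exact mem_biUnion hβ (mem_biUnion hβ' hn)

theorem badPoints_finite (hinj : ∀ α α' β : Omega1, α < α' → α' < β → p α β ≠ p α' β)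
    (had : ∀ β β' : Omega1, β < β' →
      ({n : ℕ | ∃ α : Omega1, α < β ∧ p α β = n} ∩
        {n : ℕ | ∃ α : Omega1, α < β ∧ p α β' = n}).Finite)
    (W : Finset (ℕ × ℕ)) (t : Finset Omega1) : (badPoints p W t).Finite := by
  have hfiber (β : Omega1) : {α | α < β ∧ p α β ∈ forbiddenValues p W t}.Finite := by
    refine Finite.of_finite_image (f := fun α => p α β)
      ((forbiddenValues_finite had W t).subset ?_) ?_
    · rintro _ ⟨α, ⟨-, hα⟩, rfl⟩
      exact hα
    · intro α ⟨hαβ, _⟩ α' ⟨hα'β, _⟩ h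
      by_contra hne
      rcases lt_or_gt_of_ne hne with hlt | hlt
      exacts [hinj α α' β hlt hα'β h, hinj α' α β hlt hαβ h.symm]
  refine (t.finite_toSet.biUnion fun β _ => hfiber β).subset ?_
  rintro α ⟨β, hβ, hα⟩
  exact mem_biUnion hβ hα

theorem notMem_image_snd_of_notMem_badPoints {W : Finset (ℕ × ℕ)} {t' : Finset Omega1}
    {α β : Omega1} (hα : α ∉ badPoints p W t') (hβ : β ∈ t') (hαβ : α < β) :
    p α β ∉ W.image Prod.snd :=
  fun h => hα ⟨β, hβ, hαβ, Or.inl h⟩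

theorem injOn_of_notMem_badPoints (hinj : ∀ α α' β : Omega1, α < α' → α' < β → p α β ≠ p α' β)
    {W : Finset (ℕ × ℕ)} {t t' : Finset Omega1} (hlt : ∀ α ∈ t, ∀ β ∈ t', α < β)
    (hgood : ∀ α ∈ t, α ∉ badPoints p W t') :
    InjOn (fun x : Omega1 × Omega1 => p x.1 x.2) ↑(t ×ˢ t') := by
  -- for `β < β'`, a common value of `p α β` and `p α' β'` is shared by the fibers at `β, β'`
  have hshared {α α' β β'} (hα : α ∈ t) (hα' : α' ∈ t) (hβ : β ∈ t') (hβ' : β' ∈ t')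
      (hββ' : β < β') (h : p α β = p α' β') : False :=
    hgood α hα ⟨β, hβ, hlt α hα β hβ,
      Or.inr ⟨β, hβ, β', hβ', hββ', ⟨α, hlt α hα β hβ, rfl⟩, ⟨α', hlt α' hα' β hβ, h.symm⟩⟩⟩
  rintro ⟨α, β⟩ hx ⟨α', β'⟩ hx' (h : p α β = p α' β')
  obtain ⟨hα, hβ⟩ := Finset.mem_product.1 hx
  obtain ⟨hα', hβ'⟩ := Finset.mem_product.1 hx'
  rcases lt_trichotomy β β' with hββ' | rfl | hββ'
  · exact (hshared hα hα' hβ hβ' hββ' h).elim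
  · rcases lt_trichotomy α α' with hαα' | rfl | hαα'
    · exact (hinj α α' β hαα' (hlt α' hα' β hβ) h).elim
    · rfl
    · exact (hinj α' α β hαα' (hlt α hα β hβ) h.symm).elim
  · exact (hshared hα' hα hβ' hβ hββ' h.symm).elim

end ForbiddenValues

theorem Finset.sdiff_eq_sdiff_of_forall_lt {X : Type*} [Preorder X] [DecidableEq X]
    {A A' R : Finset X} (hR : R ⊆ A) (hR' : R ⊆ A')
    (hlt : ∀ α ∈ A \ R, ∀ β ∈ A' \ R, α < β) : A \ A' = A \ R ∧ A' \ A = A' \ R := by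
  have hdisj (α : X) (hα : α ∈ A \ R) (hα' : α ∈ A' \ R) : False :=
    lt_irrefl α (hlt α hα α hα')
  constructor <;> ext α <;> simp only [Finset.mem_sdiff] at hdisj ⊢
  · exact ⟨fun h => ⟨h.1, fun hαR => h.2 (hR' hαR)⟩,
      fun h => ⟨h.1, fun hαA' => hdisj α h ⟨hαA', h.2⟩⟩⟩
  · exact ⟨fun h => ⟨h.1, fun hαR => h.2 (hR hαR)⟩,
      fun h => ⟨h.1, fun hαA => hdisj α ⟨hαA, h.2⟩ h⟩⟩

section PropertyK

variable {p c : Omega1 → Omega1 → ℕ}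

theorem exists_not_countable_same_w {S : Set (QCond p c)} (hS : ¬ S.Countable) :
    ∃ S₀ ⊆ S, ¬ S₀.Countable ∧
      ∀ q ∈ S₀, ∀ q' ∈ S₀, q'.wdom = q.wdom ∧ ∀ k ∈ q.wdom, q'.w k = q.w k := by
  obtain ⟨W, hW⟩ := exists_not_countable_fiber hS countable_univ (mapsTo_univ (·.wdom) S)
  obtain ⟨g, hg⟩ := exists_not_countable_fiber hW countable_univ
    (mapsTo_univ (fun (q : QCond p c) (k : W) => q.w k) _)
  refine ⟨_, fun q hq => hq.1.1, hg, ?_⟩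
  rintro q ⟨⟨-, hqW⟩, hqg⟩ q' ⟨⟨-, hq'W⟩, hq'g⟩
  refine ⟨hq'W.trans hqW.symm, fun k hk => ?_⟩
  exact congrFun (hq'g.trans hqg.symm) ⟨k, hqW ▸ hk⟩

theorem exists_not_countable_compatible
    (hinj : ∀ α α' β : Omega1, α < α' → α' < β → p α β ≠ p α' β)
    (had : ∀ β β' : Omega1, β < β' →
      ({n : ℕ | ∃ α : Omega1, α < β ∧ p α β = n} ∩
        {n : ℕ | ∃ α : Omega1, α < β ∧ p α β' = n}).Finite)
    (q : Omega1 → QCond p c) (hwdom : ∀ ι ι', (q ι').wdom = (q ι).wdom)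
    (hw : ∀ ι ι', ∀ k ∈ (q ι).wdom, (q ι').w k = (q ι).w k) :
    ∃ J : Set Omega1, ¬ J.Countable ∧ ∀ ι ∈ J, ∀ ι' ∈ J, ι < ι' → QCompatible (q ι) (q ι') := by
  obtain ⟨U, R, hU, hRU, hlt⟩ := Omega1.exists_delta_system fun ι => (q ι).a
  obtain ⟨g, hg⟩ := exists_not_countable_fiber hU countable_univ
    (mapsTo_univ (fun ι (α : R) => (q ι).f α) _)
  set U' := {ι ∈ U | (fun α : R => (q ι).f α) = g}
  set bad : Omega1 → Omega1 → Prop :=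
    fun ι ι' => ∃ α ∈ (q ι).a \ R, α ∈ badPoints p (q ι').wdom ((q ι').a \ R)
  have hbad : ∀ ι' ∈ U', {ι ∈ U' | ι < ι' ∧ bad ι ι'}.Finite := fun ι' _ =>
    (Omega1.finite_setOf_tail_inter hlt (badPoints_finite hinj had _ _)).subset
      fun ι ⟨hι, _, hbad⟩ => ⟨hι.1, hbad⟩
  obtain ⟨J, hJU', hJ, hfree⟩ := Omega1.exists_not_countable_free hg bad hbad
  refine ⟨J, hJ, fun ι hι ι' hι' hιι' => ?_⟩
  obtain ⟨hιU, hιg⟩ := hJU' hι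
  obtain ⟨hι'U, hι'g⟩ := hJU' hι'
  obtain ⟨hsd, hsd'⟩ := Finset.sdiff_eq_sdiff_of_forall_lt (hRU ι hιU) (hRU ι' hι'U)
    (hlt ι hιU ι' hι'U hιι')
  have hgood : ∀ α ∈ (q ι).a \ R, α ∉ badPoints p (q ι').wdom ((q ι').a \ R) :=
    fun α hα hαbad => hfree ι hι ι' hι' hιι' ⟨α, hα, hαbad⟩
  have hf (α : Omega1) (hα : α ∈ (q ι).a) (hα' : α ∈ (q ι').a) : (q ι).f α = (q ι').f α := by
    have hαR : α ∈ R := by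
      by_contra hαR
      exact (Finset.mem_sdiff.1 (hsd ▸ Finset.mem_sdiff.2 ⟨hα, hαR⟩)).2 hα'
    exact congrFun (hιg.trans hι'g.symm) ⟨α, hαR⟩
  refine QCompatible.of_fresh (hwdom ι ι') (hw ι ι') hf ?_ ?_ ?_ <;> rw [hsd, hsd']
  · exact hlt ι hιU ι' hι'U hιι'
  · rw [← hwdom ι ι']
    exact fun α hα β hβ => notMem_image_snd_of_notMem_badPoints (hgood α hα) hβ
      (hlt ι hιU ι' hι'U hιι' α hα β hβ)
  · exact injOn_of_notMem_badPoints hinj (hlt ι hιU ι' hι'U hιι') hgood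

end PropertyK

/-- If `p` has injective and almost-disjoint fibers then, for any coloring `c`, the
poset `ℚ(p,c)` has Property K: every uncountable set of conditions has an uncountable
pairwise compatible subset. -/
theorem statement14 (p c : Omega1 → Omega1 → ℕ)
    (hinj : ∀ α α' β : Omega1, α < α' → α' < β → p α β ≠ p α' β)
    (had : ∀ β β' : Omega1, β < β' →
      ({n : ℕ | ∃ α : Omega1, α < β ∧ p α β = n} ∩
        {n : ℕ | ∃ α : Omega1, α < β ∧ p α β' = n}).Finite) :
    ∀ S : Set (QCond p c), ¬ S.Countable →
      ∃ T ⊆ S, ¬ T.Countable ∧ ∀ q ∈ T, ∀ q' ∈ T, QCompatible q q' := by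
  intro S hS
  obtain ⟨S₀, hS₀S, hS₀, hw⟩ := exists_not_countable_same_w hS
  obtain ⟨q, hq_inj, hqS₀⟩ := Omega1.exists_injective_of_not_countable hS₀
  obtain ⟨J, hJ, hcompat⟩ := exists_not_countable_compatible hinj had q
    (fun ι ι' => (hw _ (hqS₀ ι) _ (hqS₀ ι')).1) (fun ι ι' => (hw _ (hqS₀ ι) _ (hqS₀ ι')).2)
  refine ⟨q '' J, image_subset_iff.2 fun ι _ => hS₀S (hqS₀ ι),
    fun h => hJ (countable_of_injective_of_countable_image hq_inj.injOn h), ?_⟩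
  rintro _ ⟨ι, hι, rfl⟩ _ ⟨ι', hι', rfl⟩
  rcases lt_trichotomy ι ι' with h | rfl | h
  · exact hcompat ι hι ι' hι' h
  · exact ⟨q ι, QLe.refl _, QLe.refl _⟩
  · exact (hcompat ι' hι' ι hι h).symm
end
end
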